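/- arXiv:1802.09665 — 6 statements merged into one kernel-verified Lean document; each statement's English description precedes it below -/
import Mathlib

section
/- For every graph G, the treedepth of G equals the minimum number of colors in a centered coloring of G. -/
/-- A linear coloring: every path in `G` contains a vertex whose color appears
exactly once on the path. -/
def IsLinearColoring {V C : Type*} [DecidableEq C] (G : SimpleGraph V) (ψ : V → C) : Prop :=
  ∀ ⦃u v : V⦄ (p : G.Walk u v), p.IsPath →
    ∃ w ∈ p.support, (p.support.map ψ).count (ψ w) = 1

/-- A centered coloring: every nonempty vertex set inducing a connected subgraph
contains a vertex whose color appears exactly once in the set. -/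
def IsCenteredColoring {V C : Type*} [DecidableEq C] (G : SimpleGraph V) (φ : V → C) : Prop :=
  ∀ S : Finset V, S.Nonempty → (G.induce (S : Set V)).Connected →
    ∃ w ∈ S, (S.filter (fun x => φ x = φ w)).card = 1

/-- The linear coloring number: minimum number of colors of a linear coloring. -/
noncomputable def chiLin {V : Type*} (G : SimpleGraph V) : ℕ :=
  sInf {k | ∃ ψ : V → Fin k, IsLinearColoring G ψ}

/-- The centered coloring number: minimum number of colors of a centered coloring. -/
noncomputable def chiCen {V : Type*} (G : SimpleGraph V) : ℕ :=
  sInf {k | ∃ φ : V → Fin k, IsCenteredColoring G φ}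

/-- A treedepth decomposition of `G`: a rooted forest on the vertices of `G`,
given by its ancestor relation `anc` (a partial order whose down-sets are chains),
such that every edge of `G` joins an ancestor-descendant pair. -/
structure TreedepthDecomp {V : Type*} (G : SimpleGraph V) where
  anc : V → V → Prop
  refl : ∀ v, anc v v
  antisymm : ∀ u v, anc u v → anc v u → u = v
  trans : ∀ u v w, anc u v → anc v w → anc u w
  chain : ∀ u v w, anc u w → anc v w → anc u v ∨ anc v u
  edge : ∀ u v, G.Adj u v → anc u v ∨ anc v u

/-- The decomposition has depth at most `k`: every ancestor-descendant chain has
at most `k` vertices. -/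
def TreedepthDecomp.depthLE {V : Type*} {G : SimpleGraph V} (d : TreedepthDecomp G)
    (k : ℕ) : Prop :=
  ∀ s : Finset V, (∀ a ∈ s, ∀ b ∈ s, d.anc a b ∨ d.anc b a) → s.card ≤ k

/-- The treedepth of `G`: minimum depth of a treedepth decomposition. -/
noncomputable def treedepth {V : Type*} (G : SimpleGraph V) : ℕ :=
  sInf {k | ∃ d : TreedepthDecomp G, d.depthLE k}


/-!
A decomposition of depth `k` gives a centered coloring with `k` colors: color each vertex by its
number of ancestors. Any walk passes through a common ancestor of its ends, so in a connected set
the vertex with fewest ancestors is unique, and it is the only vertex of the set with its color.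

Conversely, a centered coloring with `k` colors gives an elimination forest: starting from the
component of `v`, repeatedly delete the center of the current connected set and pass to the
component of `v` in what is left, until `v` itself is the center. The ancestors of `v` are the
centers met on the way. An ancestor is the center of a connected set containing its descendant,
so their colors differ, and every chain uses distinct colors.
-/

open Finset

namespace SimpleGraph

variable {V : Type*} (G : SimpleGraph V)

def restrictEdges (s : Set V) : SimpleGraph V where
  Adj a b := G.Adj a b ∧ a ∈ s ∧ b ∈ s
  symm := ⟨fun _ _ h => ⟨h.1.symm, h.2.2, h.2.1⟩⟩
  loopless := ⟨fun _ h => G.loopless.irrefl _ h.1⟩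

lemma connected_induce_singleton (v : V) : (G.induce (({v} : Finset V) : Set V)).Connected := by
  rw [Finset.coe_singleton, induce_singleton_eq_top]
  exact connected_top

section ComponentIn

variable [Fintype V]

open scoped Classical in
/-- The component of `v` in `G[s]` if `v ∈ s`, and `{v}` otherwise. -/
noncomputable def componentIn (s : Finset V) (v : V) : Finset V :=
  univ.filter fun w => (G.restrictEdges s).Reachable v w

variable {G} {s : Finset V} {u v w : V}

@[simp]
lemma mem_componentIn : w ∈ G.componentIn s v ↔ (G.restrictEdges s).Reachable v w := by
  simp [componentIn]

lemma self_mem_componentIn : v ∈ G.componentIn s v :=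
  mem_componentIn.mpr .rfl

lemma componentIn_eq_of_mem (h : w ∈ G.componentIn s v) :
    G.componentIn s w = G.componentIn s v := by
  ext x
  simp only [mem_componentIn]
  exact ⟨(mem_componentIn.mp h).trans, (mem_componentIn.mp h).symm.trans⟩

lemma mem_componentIn_of_adj (huw : G.Adj u w) (hu : u ∈ s) (hw : w ∈ s) :
    w ∈ G.componentIn s u :=
  mem_componentIn.mpr (Adj.reachable ⟨huw, hu, hw⟩)

lemma componentIn_subset_insert [DecidableEq V] : G.componentIn s v ⊆ insert v s := by
  intro w hw
  obtain ⟨p⟩ := (mem_componentIn.mp hw).symm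
  cases p with
  | nil => exact mem_insert_self _ _
  | cons h _ => exact mem_insert_of_mem h.2.1

lemma componentIn_of_notMem (hv : v ∉ s) : G.componentIn s v = {v} := by
  ext w
  simp only [mem_componentIn, mem_singleton]
  constructor
  · rintro ⟨p⟩
    cases p with
    | nil => rfl
    | cons h _ => exact absurd h.2.1 hv
  · rintro rfl
    exact .rfl

lemma connected_induce_componentIn : (G.induce (G.componentIn s v : Set V)).Connected := by
  rw [connected_iff_exists_forall_reachable]
  refine ⟨⟨v, self_mem_componentIn⟩, ?_⟩
  suffices ∀ {a b : V} (p : (G.restrictEdges s).Walk a b) (ha : a ∈ G.componentIn s v),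
      (G.induce (G.componentIn s v : Set V)).Reachable ⟨a, ha⟩
        ⟨b, mem_componentIn.mpr ((mem_componentIn.mp ha).trans p.reachable)⟩ by
    rintro ⟨w, hw⟩
    exact this (mem_componentIn.mp hw).some self_mem_componentIn
  intro a b p ha
  induction p with
  | nil => exact .rfl
  | cons h _ ih =>
    have hreach : (G.restrictEdges s).Reachable v _ := (mem_componentIn.mp ha).trans h.reachable
    have hstep : (G.induce (G.componentIn s v : Set V)).Adj ⟨_, ha⟩
        ⟨_, mem_componentIn.mpr hreach⟩ := h.1
    exact hstep.reachable.trans (ih _)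

end ComponentIn

section Elimination

variable [Fintype V] [DecidableEq V] (c : Finset V → V)

def SelectsFromConnected : Prop :=
  ∀ S : Finset V, S.Nonempty → (G.induce (S : Set V)).Connected → c S ∈ S

noncomputable def elimBag (v : V) : ℕ → Finset V
  | 0 => G.componentIn univ v
  | n + 1 => G.componentIn ((elimBag v n).erase (c (elimBag v n))) v

def elimAnc (u v : V) : Prop :=
  ∃ n, c (G.elimBag c v n) = u

variable {G c} {u v w : V} {m n : ℕ}

lemma self_mem_elimBag (v : V) (n : ℕ) : v ∈ G.elimBag c v n := by
  cases n <;> exact self_mem_componentIn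

lemma connected_induce_elimBag (v : V) (n : ℕ) :
    (G.induce (G.elimBag c v n : Set V)).Connected := by
  cases n <;> exact connected_induce_componentIn

lemma elimBag_succ_subset (v : V) (n : ℕ) : G.elimBag c v (n + 1) ⊆ G.elimBag c v n :=
  componentIn_subset_insert.trans (insert_subset (self_mem_elimBag v n) (erase_subset _ _))

lemma elimBag_antitone (v : V) : Antitone (G.elimBag c v) :=
  antitone_nat_of_succ_le (elimBag_succ_subset v)

lemma elimBag_eq_of_mem : ∀ {n : ℕ}, w ∈ G.elimBag c v n → G.elimBag c w n = G.elimBag c v n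
  | 0, h => componentIn_eq_of_mem h
  | n + 1, h => by
    simp only [elimBag, elimBag_eq_of_mem (elimBag_succ_subset v n h)]
    exact componentIn_eq_of_mem h

lemma elimBag_eq_of_mem_of_le (h : w ∈ G.elimBag c v n) (hmn : m ≤ n) :
    G.elimBag c w m = G.elimBag c v m :=
  elimBag_eq_of_mem (elimBag_antitone v hmn h)

lemma elimBag_succ_of_select (h : c (G.elimBag c v n) = v) : G.elimBag c v (n + 1) = {v} :=
  componentIn_of_notMem fun hv => (mem_erase.mp hv).1 h.symm

lemma elimBag_eq_or_elimAnc_of_adj (huv : G.Adj u v) (n : ℕ) :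
    G.elimBag c u n = G.elimBag c v n ∨ G.elimAnc c u v ∨ G.elimAnc c v u := by
  induction n with
  | zero =>
    exact .inl (componentIn_eq_of_mem (mem_componentIn_of_adj huv (mem_univ u) (mem_univ v))).symm
  | succ n ih =>
    rcases ih with heq | hanc
    · by_cases hu : c (G.elimBag c u n) = u
      · exact .inr (.inl ⟨n, heq ▸ hu⟩)
      by_cases hv : c (G.elimBag c u n) = v
      · exact .inr (.inr ⟨n, hv⟩)
      left
      have hadj := mem_componentIn_of_adj huv (mem_erase.mpr ⟨Ne.symm hu, self_mem_elimBag u n⟩)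
        (mem_erase.mpr ⟨Ne.symm hv, heq ▸ self_mem_elimBag v n⟩)
      simp only [elimBag, ← heq]
      exact (componentIn_eq_of_mem hadj).symm
    · exact .inr hanc

variable (hc : G.SelectsFromConnected c)
include hc

lemma select_elimBag_mem (v : V) (n : ℕ) : c (G.elimBag c v n) ∈ G.elimBag c v n :=
  hc _ ⟨v, self_mem_elimBag v n⟩ (connected_induce_elimBag v n)

lemma select_elimBag_self_of_select (h : c (G.elimBag c v n) = u) :
    c (G.elimBag c u n) = u := by
  rw [elimBag_eq_of_mem_of_le (h ▸ select_elimBag_mem hc v n) le_rfl, h]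

lemma select_elimBag_of_le (h : c (G.elimBag c v m) = v) (hmn : m ≤ n) :
    c (G.elimBag c v n) = v := by
  induction n, hmn using Nat.le_induction with
  | base => exact h
  | succ n _ ih =>
    rw [elimBag_succ_of_select ih]
    simpa using hc {v} (singleton_nonempty v) (G.connected_induce_singleton v)

lemma card_elimBag_succ_lt (h : c (G.elimBag c v n) ≠ v) :
    (G.elimBag c v (n + 1)).card < (G.elimBag c v n).card := by
  refine card_lt_card ((ssubset_iff_of_subset (elimBag_succ_subset v n)).mpr
    ⟨_, select_elimBag_mem hc v n, fun hmem => ?_⟩)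
  simpa [h] using componentIn_subset_insert hmem

lemma exists_select_elimBag_eq (v : V) : ∃ n, c (G.elimBag c v n) = v := by
  by_contra! hne
  have hcard : ∀ n, (G.elimBag c v n).card + n ≤ (G.elimBag c v 0).card := by
    intro n
    induction n with
    | zero => simp
    | succ n ih => have := card_elimBag_succ_lt hc (hne n); omega
  have := hcard ((G.elimBag c v 0).card + 1)
  omega

lemma elimAnc_trans (huv : G.elimAnc c u v) (hvw : G.elimAnc c v w) : G.elimAnc c u w := by
  obtain ⟨n, hn⟩ := huv
  obtain ⟨m, hm⟩ := hvw
  rcases le_total n m with h | h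
  · exact ⟨n, by rw [← elimBag_eq_of_mem_of_le (hm ▸ select_elimBag_mem hc w m) h, hn]⟩
  · have hv := select_elimBag_of_le hc (select_elimBag_self_of_select hc hm) h
    exact ⟨m, by rw [hm, ← hn, hv]⟩

lemma elimAnc_antisymm (huv : G.elimAnc c u v) (hvu : G.elimAnc c v u) : u = v := by
  obtain ⟨n, hn⟩ := huv
  obtain ⟨m, hm⟩ := hvu
  rcases le_total m n with h | h
  · rw [← hn, select_elimBag_of_le hc (select_elimBag_self_of_select hc hm) h]
  · rw [← hm, select_elimBag_of_le hc (select_elimBag_self_of_select hc hn) h]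

lemma elimAnc_chain (hu : G.elimAnc c u w) (hv : G.elimAnc c v w) :
    G.elimAnc c u v ∨ G.elimAnc c v u := by
  obtain ⟨n, hn⟩ := hu
  obtain ⟨m, hm⟩ := hv
  rcases le_total n m with h | h
  · left
    have hvn := elimBag_antitone w h (hm ▸ select_elimBag_mem hc w m)
    exact ⟨n, by rw [elimBag_eq_of_mem_of_le hvn le_rfl, hn]⟩
  · right
    have hun := elimBag_antitone w h (hn ▸ select_elimBag_mem hc w n)
    exact ⟨m, by rw [elimBag_eq_of_mem_of_le hun le_rfl, hm]⟩

lemma elimAnc_or_elimAnc_of_adj (huv : G.Adj u v) : G.elimAnc c u v ∨ G.elimAnc c v u := by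
  obtain ⟨n, hn⟩ := exists_select_elimBag_eq hc v
  refine (elimBag_eq_or_elimAnc_of_adj huv (n + 1)).resolve_left fun heq => huv.ne ?_
  have hu := self_mem_elimBag (G := G) (c := c) u (n + 1)
  rwa [heq, elimBag_succ_of_select hn, mem_singleton] at hu

noncomputable def elimDecomp : TreedepthDecomp G where
  anc := G.elimAnc c
  refl := exists_select_elimBag_eq hc
  antisymm _ _ := elimAnc_antisymm hc
  trans _ _ _ := elimAnc_trans hc
  chain _ _ _ := elimAnc_chain hc
  edge _ _ := elimAnc_or_elimAnc_of_adj hc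

end Elimination

end SimpleGraph

namespace TreedepthDecomp

variable {V : Type*} {G : SimpleGraph V} (d : TreedepthDecomp G) {k : ℕ}

lemma depthLE_of_anc_ne {φ : V → Fin k} (h : ∀ u v, d.anc u v → u ≠ v → φ u ≠ φ v) :
    d.depthLE k := by
  intro s hs
  have hinj : Set.InjOn φ s := fun a ha b hb hab => by
    by_contra hne
    rcases hs a ha b hb with hanc | hanc
    · exact h a b hanc hne hab
    · exact h b a hanc (Ne.symm hne) hab.symm
  simpa using card_le_card_of_injOn φ (fun a _ => mem_univ (φ a)) hinj

lemma exists_mem_support_anc_anc {a b : V} (p : G.Walk a b) :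
    ∃ c ∈ p.support, d.anc c a ∧ d.anc c b := by
  induction p with
  | nil => exact ⟨_, List.mem_singleton_self _, d.refl _, d.refl _⟩
  | @cons x y _ hxy _ ih =>
    obtain ⟨c, hc, hcy, hcb⟩ := ih
    rcases d.edge _ _ hxy with hxy' | hyx
    · rcases d.chain x c y hxy' hcy with hxc | hcx
      · exact ⟨x, List.mem_cons_self, d.refl x, d.trans _ _ _ hxc hcb⟩
      · exact ⟨c, List.mem_cons_of_mem _ hc, hcx, hcb⟩
    · exact ⟨c, List.mem_cons_of_mem _ hc, d.trans _ _ _ hcy hyx, hcb⟩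

noncomputable def level (v : V) : ℕ :=
  {u | d.anc u v}.ncard

variable {d}

lemma finite_setOf_anc (hd : d.depthLE k) (v : V) : {u | d.anc u v}.Finite := by
  by_contra hinf
  obtain ⟨t, hts, htk⟩ := Set.Infinite.exists_subset_card_eq hinf (k + 1)
  have := hd t fun a ha b hb => d.chain a b v (hts ha) (hts hb)
  omega

lemma level_le (hd : d.depthLE k) (v : V) : d.level v ≤ k := by
  rw [level, Set.ncard_eq_toFinset_card _ (finite_setOf_anc hd v)]
  exact hd _ fun a ha b hb => d.chain a b v (by simpa using ha) (by simpa using hb)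

lemma level_pos (hd : d.depthLE k) (v : V) : 0 < d.level v :=
  (Set.ncard_pos (finite_setOf_anc hd v)).mpr ⟨v, d.refl v⟩

lemma eq_of_anc_of_level_le (hd : d.depthLE k) {u v : V} (h : d.anc u v)
    (hle : d.level v ≤ d.level u) : u = v := by
  by_contra hne
  have hlt : {x | d.anc x u} ⊂ {x | d.anc x v} :=
    ⟨fun x hx => d.trans x u v hx h, fun hsub => hne (d.antisymm u v h (hsub (d.refl v)))⟩
  exact (Set.ncard_lt_ncard hlt (finite_setOf_anc hd v)).not_ge hle

noncomputable def levelColoring (hd : d.depthLE k) (v : V) : Fin k :=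
  ⟨d.level v - 1, by have := level_pos hd v; have := level_le hd v; omega⟩

lemma isCenteredColoring_levelColoring (hd : d.depthLE k) :
    IsCenteredColoring G (levelColoring hd) := by
  intro S hS hconn
  obtain ⟨w, hw, hmin⟩ := S.exists_min_image d.level hS
  refine ⟨w, hw, card_eq_one.mpr ⟨w, eq_singleton_iff_unique_mem.mpr
    ⟨mem_filter.mpr ⟨hw, rfl⟩, ?_⟩⟩⟩
  intro x hx
  obtain ⟨hxS, hcol⟩ := mem_filter.mp hx
  have hlevel : d.level x = d.level w := by
    have := level_pos hd x
    have := level_pos hd w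
    have := congrArg Fin.val hcol
    simp only [levelColoring] at this
    omega
  obtain ⟨p⟩ := hconn.preconnected ⟨x, hxS⟩ ⟨w, hw⟩
  obtain ⟨c, hc, hcx, hcw⟩ :=
    d.exists_mem_support_anc_anc (p.map (SimpleGraph.Embedding.induce _).toHom)
  have hcS : c ∈ S := by
    rw [SimpleGraph.Walk.support_map, List.mem_map] at hc
    obtain ⟨c', -, rfl⟩ := hc
    exact c'.2
  obtain rfl : c = x := eq_of_anc_of_level_le hd hcx (hlevel ▸ hmin c hcS)
  exact eq_of_anc_of_level_le hd hcw (hlevel ▸ le_rfl)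

end TreedepthDecomp

open SimpleGraph in
lemma IsCenteredColoring.exists_treedepthDecomp {V : Type*} [Fintype V] {G : SimpleGraph V}
    {k : ℕ} {φ : V → Fin k} (hφ : IsCenteredColoring G φ) :
    ∃ d : TreedepthDecomp G, d.depthLE k := by
  classical
  -- `choose!` below needs a vertex to define `c` on sets without a center.
  cases isEmpty_or_nonempty V
  · refine ⟨⟨fun _ _ => True, isEmptyElim, fun u => isEmptyElim u, fun u => isEmptyElim u,
      fun u => isEmptyElim u, fun u => isEmptyElim u⟩, fun s _ => ?_⟩
    simp [eq_empty_of_isEmpty s]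
  choose! c hc using hφ
  refine ⟨elimDecomp (fun S hS hconn => (hc S hS hconn).1),
    TreedepthDecomp.depthLE_of_anc_ne _ (φ := φ) ?_⟩
  rintro _ v ⟨n, rfl⟩ hne hcol
  have hv := self_mem_elimBag (G := G) (c := c) v n
  obtain ⟨hcS, hunique⟩ := hc _ ⟨v, hv⟩ (connected_induce_elimBag v n)
  have : 1 < ((G.elimBag c v n).filter fun x => φ x = φ (c (G.elimBag c v n))).card :=
    one_lt_card.mpr
      ⟨_, mem_filter.mpr ⟨hcS, rfl⟩, v, mem_filter.mpr ⟨hv, hcol.symm⟩, hne⟩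
  omega

/-- For every graph `G`, the treedepth of `G` equals the minimum
number of colors in a centered coloring of `G`. -/
theorem treedepth_eq_min_centered_coloring {V : Type*} [Fintype V] (G : SimpleGraph V) :
    treedepth G = sInf {k | ∃ φ : V → Fin k, IsCenteredColoring G φ} := by
  rw [treedepth]
  congr 1
  ext k
  exact ⟨fun ⟨d, hd⟩ => ⟨_, d.isCenteredColoring_levelColoring hd⟩,
    fun ⟨_, hφ⟩ => hφ.exists_treedepthDecomp⟩
end

section
/- Every linear coloring of a path graph P_n on n vertices uses at least log2(n+1) colors. -/
/-!
The paths in `P_n` are its intervals, so a linear coloring of `P_n` is a word of length `n` in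
which every nonempty factor has a letter occurring exactly once. Removing such a letter `a` from
the whole word splits it into two factors that avoid `a`, hence use at most `k - 1` of its `k`
letters; by induction each has length below `2 ^ (k - 1)`, so `n < 2 ^ k`.
-/

namespace List

variable {α : Type*} [DecidableEq α]

def HasCenteredInfixes (l : List α) : Prop :=
  ∀ t, t <:+: l → t ≠ [] → ∃ a ∈ t, t.count a = 1

theorem HasCenteredInfixes.infix {l t : List α} (hl : l.HasCenteredInfixes) (ht : t <:+: l) :
    t.HasCenteredInfixes :=
  fun s hs hne => hl s (hs.trans ht) hne

theorem card_toFinset_lt_of_subset {l u : List α} {a : α} (hu : u ⊆ l) (ha : a ∈ l)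
    (hau : a ∉ u) : u.toFinset.card < l.toFinset.card :=
  Finset.card_lt_card <|
    (Finset.ssubset_iff_of_subset fun _ hx => mem_toFinset.2 (hu (mem_toFinset.1 hx))).2
      ⟨a, mem_toFinset.2 ha, fun h => hau (mem_toFinset.1 h)⟩

theorem HasCenteredInfixes.length_lt_two_pow {l : List α} (hl : l.HasCenteredInfixes) :
    l.length < 2 ^ l.toFinset.card := by
  rcases eq_or_ne l [] with rfl | hne
  · simp
  obtain ⟨a, ha, hcount⟩ := hl l infix_rfl hne
  obtain ⟨s, t, rfl⟩ := append_of_mem ha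
  have ⟨has, hat⟩ : a ∉ s ∧ a ∉ t := by
    simp only [count_append, count_cons_self] at hcount
    exact ⟨count_eq_zero.1 (by omega), count_eq_zero.1 (by omega)⟩
  have hs : s <:+: s ++ a :: t := (prefix_append s (a :: t)).isInfix
  have ht : t <:+: s ++ a :: t := ((suffix_cons a t).trans (suffix_append s (a :: t))).isInfix
  have hs_len := (hl.infix hs).length_lt_two_pow
  have ht_len := (hl.infix ht).length_lt_two_pow
  have hs_pow := Nat.pow_le_pow_right two_pos (card_toFinset_lt_of_subset hs.subset ha has)
  have ht_pow := Nat.pow_le_pow_right two_pos (card_toFinset_lt_of_subset ht.subset ha hat)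
  rw [pow_succ] at hs_pow ht_pow
  simp only [length_append, length_cons]
  omega
termination_by l.length
decreasing_by all_goals subst_vars; simp only [length_append, length_cons]; omega

end List

open SimpleGraph

theorem SimpleGraph.isChain_pathGraph_adj_finRange (n : ℕ) :
    (List.finRange n).IsChain (pathGraph n).Adj := by
  rw [← List.ofFn_id, List.isChain_ofFn]
  exact fun _ _ => pathGraph_adj.2 (Or.inl rfl)

theorem IsLinearColoring.hasCenteredInfixes_ofFn {α : Type*} [DecidableEq α] {n : ℕ}
    {ψ : Fin n → α} (h : IsLinearColoring (pathGraph n) ψ) : (List.ofFn ψ).HasCenteredInfixes := by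
  intro t ht hne
  rw [List.ofFn_eq_map, List.infix_map_iff] at ht
  obtain ⟨u, hu, rfl⟩ := ht
  have hune : u ≠ [] := by simpa using hne
  set p := Walk.ofSupport u hune ((isChain_pathGraph_adj_finRange n).infix hu)
  have hp : p.IsPath := .mk' (by simpa [p] using (List.nodup_finRange n).sublist hu.sublist)
  obtain ⟨w, hw, hcount⟩ := h p hp
  simp only [p, Walk.support_ofSupport] at hw hcount
  exact ⟨ψ w, List.mem_map_of_mem hw, hcount⟩

/-- Every linear coloring of the path on `n` vertices uses at least
`log₂ (n + 1)` colors. -/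
theorem linearColoring_pathGraph_lower_bound (n : ℕ) (ψ : Fin n → ℕ)
    (h : IsLinearColoring (SimpleGraph.pathGraph n) ψ) :
    Real.logb 2 (n + 1) ≤ ((Finset.univ.image ψ).card : ℝ) := by
  have hlt := h.hasCenteredInfixes_ofFn.length_lt_two_pow
  have hcolors : (List.ofFn ψ).toFinset = Finset.univ.image ψ := by ext; simp
  rw [List.length_ofFn, hcolors] at hlt
  rw [Real.logb_le_iff_le_rpow one_lt_two (by positivity), Real.rpow_natCast]
  exact_mod_cast hlt
end

section
/- If G admits a linear coloring with k colors, then the treedepth of G is at most 2^k. -/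
/-! Following parents in a depth-first search forest of `G` from any vertex traces a path of
`G`, and every edge of `G` joins an ancestor to a descendant; so the forest is a treedepth
decomposition whose depth is at most the largest number of vertices on a path of `G`. Under a
linear colouring a path has fewer than `2 ^ k` vertices, `k` the number of colours on it:
removing a vertex whose colour is unique on the path leaves two subpaths that miss that colour. -/

section UniqueColor

variable {α C : Type*} [DecidableEq C] {ψ : α → C}

variable (ψ) in
def HasUniqueColor (l : List α) : Prop :=
  ∃ w ∈ l, (l.map ψ).count (ψ w) = 1

theorem card_toFinset_map_lt_of_subset {l l' : List α} {w : α} (hl' : l' ⊆ l) (hw : w ∈ l)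
    (hw' : ψ w ∉ l'.map ψ) : (l'.map ψ).toFinset.card < (l.map ψ).toFinset.card := by
  refine Finset.card_lt_card ⟨fun x hx => ?_, fun hsub => hw' ?_⟩
  · simp only [List.mem_toFinset, List.mem_map] at hx ⊢
    obtain ⟨a, ha, rfl⟩ := hx
    exact ⟨a, hl' ha, rfl⟩
  · simpa using hsub (List.mem_toFinset.mpr (List.mem_map_of_mem hw))

theorem length_lt_two_pow_card_colors (l : List α)
    (hl : ∀ l', l' <:+: l → l' ≠ [] → HasUniqueColor ψ l') :
    l.length < 2 ^ (l.map ψ).toFinset.card := by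
  induction hn : l.length using Nat.strong_induction_on generalizing l with
  | _ n ih =>
  rcases eq_or_ne l [] with rfl | hne
  · simp [← hn]
  obtain ⟨w, hw, hcount⟩ := hl l (List.infix_refl l) hne
  obtain ⟨l₁, l₂, rfl⟩ := List.append_of_mem hw
  set m := ((l₁ ++ w :: l₂).map ψ).toFinset.card
  have side : ∀ l', l' <:+: l₁ ++ w :: l₂ → (l'.map ψ).count (ψ w) = 0 → l'.length < n →
      l'.length < 2 ^ (m - 1) := by
    intro l' hl' hw' hlen
    have hfewer := card_toFinset_map_lt_of_subset hl'.subset hw (List.count_eq_zero.mp hw')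
    exact (ih _ hlen l' (fun l'' h => hl l'' (h.trans hl')) rfl).trans_le
      (Nat.pow_le_pow_right two_pos (by omega))
  simp only [List.map_append, List.map_cons, List.count_append, List.count_cons_self] at hcount
  simp only [List.length_append, List.length_cons] at hn
  have h₁ := side l₁ (List.infix_append [] l₁ (w :: l₂)) (by omega) (by omega)
  have h₂ := side l₂ ((List.suffix_append (l₁ ++ [w]) l₂).isInfix.trans (by simp))
    (by omega) (by omega)
  have hm : 0 < m := Finset.card_pos.mpr ⟨ψ w, by simp⟩
  have : 2 ^ m = 2 * 2 ^ (m - 1) := by rw [← pow_succ']; congr; omega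
  omega

end UniqueColor

namespace IsLinearColoring

variable {V C : Type*} [DecidableEq C] {G : SimpleGraph V} {ψ : V → C}

theorem hasUniqueColor_of_isInfix (h : IsLinearColoring G ψ) {u v : V} {p : G.Walk u v}
    (hp : p.IsPath) {l : List V} (hl : l <:+: p.support) (hne : l ≠ []) :
    HasUniqueColor ψ l := by
  set q := SimpleGraph.Walk.ofSupport l hne (p.isChain_adj_support.infix hl)
  have hq : q.IsPath := .mk' (by simpa [q] using hp.support_nodup.sublist hl.sublist)
  simpa [q, HasUniqueColor] using h q hq

theorem length_support_lt [Fintype C] (h : IsLinearColoring G ψ) {u v : V} {p : G.Walk u v}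
    (hp : p.IsPath) : p.support.length < 2 ^ Fintype.card C :=
  (length_lt_two_pow_card_colors _ fun _ hl hne => h.hasUniqueColor_of_isInfix hp hl hne).trans_le
    (Nat.pow_le_pow_right two_pos (Finset.card_le_univ _))

end IsLinearColoring

namespace Function

variable {V : Type*}

/-- A map `f` encodes the rooted forest in which `f x` is the parent of `x`, the fixed points of
`f` being the roots; `IsAncestor f a b` says that `a` lies on the way from `b` to its root. -/
def IsAncestor (f : V → V) (a b : V) : Prop :=
  Relation.ReflTransGen (fun x y => f x ≠ x ∧ f x = y) b a

variable {f g : V → V} {a b c : V}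

theorem IsAncestor.refl (f : V → V) (a : V) : IsAncestor f a a :=
  Relation.ReflTransGen.refl

theorem IsAncestor.trans (hab : IsAncestor f a b) (hbc : IsAncestor f b c) : IsAncestor f a c :=
  Relation.ReflTransGen.trans hbc hab

theorem isAncestor_parent (hb : f b ≠ b) : IsAncestor f (f b) b :=
  Relation.ReflTransGen.single ⟨hb, rfl⟩

theorem isAncestor_iff : IsAncestor f a b ↔ a = b ∨ f b ≠ b ∧ IsAncestor f a (f b) := by
  unfold IsAncestor
  rw [Relation.ReflTransGen.cases_head_iff]
  constructor
  · rintro (rfl | ⟨c, ⟨hne, rfl⟩, hc⟩)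
    exacts [Or.inl rfl, Or.inr ⟨hne, hc⟩]
  · rintro (rfl | ⟨hne, hc⟩)
    exacts [Or.inl rfl, Or.inr ⟨_, ⟨hne, rfl⟩, hc⟩]

theorem IsAncestor.total (ha : IsAncestor f a c) (hb : IsAncestor f b c) :
    IsAncestor f a b ∨ IsAncestor f b a :=
  (Relation.ReflTransGen.total_of_right_unique (fun _ _ _ h₁ h₂ => h₁.2.symm.trans h₂.2)
    ha hb).symm

theorem IsAncestor.mono (hfg : ∀ x, g x ≠ x → f x = g x) (h : IsAncestor g a b) :
    IsAncestor f a b :=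
  Relation.ReflTransGen.mono (fun x _ ⟨hne, hxy⟩ => ⟨hfg x hne ▸ hne, (hfg x hne).trans hxy⟩)
    _ _ h

section Height

variable {ht : V → ℕ} (hht : ∀ x, f x ≠ x → ht (f x) < ht x)
include hht

theorem IsAncestor.height_lt (hab : IsAncestor f a b) (hne : a ≠ b) : ht a < ht b := by
  have descend {x y : V} (h : Relation.TransGen (fun x y => f x ≠ x ∧ f x = y) x y) :
      ht y < ht x := by
    induction h with
    | single h => exact h.2 ▸ hht _ h.1
    | tail _ h ih => exact (h.2 ▸ hht _ h.1).trans ih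
  exact descend ((Relation.reflTransGen_iff_eq_or_transGen.mp hab).resolve_left hne)

theorem IsAncestor.antisymm (hab : IsAncestor f a b) (hba : IsAncestor f b a) : a = b := by
  by_contra hne
  exact (hab.height_lt hht hne).not_gt (hba.height_lt hht (Ne.symm hne))

end Height

section Graft

open scoped Classical in
noncomputable def graft (D : Set V) (r v : V) (f₁ f₂ : V → V) : V → V :=
  fun x => if x = r then v else if x ∈ D then f₁ x else f₂ x

variable {D : Set V} {r v : V} {f₁ f₂ : V → V}

theorem IsAncestor.graft_left (hD : ∀ x, f₁ x ≠ x → x ∈ D) (hr : f₁ r = r)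
    (h : IsAncestor f₁ a b) : IsAncestor (graft D r v f₁ f₂) a b :=
  h.mono fun x hx => by
    have hxr : x ≠ r := fun h => hx (h ▸ hr)
    simp [graft, hxr, hD x hx]

theorem IsAncestor.graft_right (hD : ∀ x, f₂ x ≠ x → x ∉ D) (hrD : r ∈ D)
    (h : IsAncestor f₂ a b) : IsAncestor (graft D r v f₁ f₂) a b :=
  h.mono fun x hx => by
    have hxr : x ≠ r := fun h => hD x hx (h ▸ hrD)
    simp [graft, hxr, hD x hx]

theorem isAncestor_graft_of_mem (hD : ∀ x, f₁ x ≠ x → x ∈ D) (hr : f₁ r = r)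
    (hroot : ∀ x ∈ D, IsAncestor f₁ r x) (hrv : r ≠ v) :
    ∀ x ∈ D, IsAncestor (graft D r v f₁ f₂) v x := by
  intro x hx
  have hparent : graft D r v f₁ f₂ r = v := by simp [graft]
  exact (hparent ▸ isAncestor_parent (hparent ▸ hrv.symm)).trans
    ((hroot x hx).graft_left hD hr)

end Graft

end Function

namespace SimpleGraph

open Function

variable {V : Type*} (G : SimpleGraph V) {f : V → V}

theorem exists_isPath_support_iff_isAncestor (hadj : ∀ x, f x ≠ x → G.Adj x (f x))
    {ht : V → ℕ} (hht : ∀ x, f x ≠ x → ht (f x) < ht x) (b : V) :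
    ∃ (r : V) (p : G.Walk b r), p.IsPath ∧ ∀ a, a ∈ p.support ↔ IsAncestor f a b := by
  induction b using (measure ht).wf.induction with
  | h b ih =>
  by_cases hb : f b = b
  · refine ⟨b, .nil, .nil, fun a => ?_⟩
    rw [isAncestor_iff]
    simp [hb]
  obtain ⟨r, p, hp, hsupp⟩ := ih (f b) (hht b hb)
  have hbp : b ∉ p.support := fun h =>
    ((hsupp b).mp h).height_lt hht (Ne.symm hb) |>.not_gt (hht b hb)
  refine ⟨r, .cons (hadj b hb) p, hp.cons hbp, fun a => ?_⟩
  rw [isAncestor_iff, Walk.support_cons, List.mem_cons, hsupp]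
  simp [hb]

/-- A normal (in Diestel's sense) spanning forest of `G[S]`, encoded by its parent map; the
height function witnesses that following parents never cycles. -/
structure IsNormalForest (S : Set V) (f : V → V) : Prop where
  mem : ∀ x, f x ≠ x → x ∈ S ∧ f x ∈ S
  adj : ∀ x, f x ≠ x → G.Adj x (f x)
  exists_height : ∃ ht : V → ℕ, ∀ x, f x ≠ x → ht (f x) < ht x
  isAncestor_or_isAncestor : ∀ x ∈ S, ∀ y ∈ S, G.Adj x y → IsAncestor f x y ∨ IsAncestor f y x

variable {G}

theorem isNormalForest_empty_id : G.IsNormalForest ∅ id where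
  mem _ h := absurd rfl h
  adj _ h := absurd rfl h
  exists_height := ⟨fun _ => 0, fun _ h => absurd rfl h⟩
  isAncestor_or_isAncestor _ h := h.elim

theorem IsNormalForest.insert {S : Set V} {v : V} (hf : G.IsNormalForest S f)
    (hv : ∀ y ∈ S, ¬ G.Adj v y) : G.IsNormalForest (insert v S) f where
  mem x hx := ⟨Or.inr (hf.mem x hx).1, Or.inr (hf.mem x hx).2⟩
  adj := hf.adj
  exists_height := hf.exists_height
  isAncestor_or_isAncestor x hx y hy hxy := by
    rcases hx with rfl | hx
    · rcases hy with rfl | hy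
      exacts [absurd hxy G.irrefl, absurd hxy (hv y hy)]
    rcases hy with rfl | hy
    exacts [absurd hxy.symm (hv x hx), hf.isAncestor_or_isAncestor x hx y hy hxy]

theorem isNormalForest_graft {D T : Set V} {r v : V} {f₁ f₂ : V → V}
    (h₁ : G.IsNormalForest D f₁) (h₂ : G.IsNormalForest T f₂) (hDT : Disjoint D T)
    (hrD : r ∈ D) (hr : f₁ r = r) (hvT : v ∈ T) (hrv : G.Adj r v)
    (hroot : ∀ x ∈ D, IsAncestor f₁ r x) (hedge : ∀ x ∈ D, ∀ y ∈ T, G.Adj x y → y = v) :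
    G.IsNormalForest (D ∪ T) (graft D r v f₁ f₂) := by
  have hD₁ x (hx : f₁ x ≠ x) : x ∈ D := (h₁.mem x hx).1
  have hD₂ x (hx : f₂ x ≠ x) : x ∉ D := hDT.notMem_of_mem_right (h₂.mem x hx).1
  refine ⟨fun x hx => ?_, fun x hx => ?_, ?_, fun x hx y hy hxy => ?_⟩
  · unfold graft at hx ⊢
    split_ifs at hx ⊢ with hxr hxD
    · exact ⟨Or.inl (hxr ▸ hrD), Or.inr hvT⟩
    · exact ⟨Or.inl (h₁.mem x hx).1, Or.inl (h₁.mem x hx).2⟩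
    · exact ⟨Or.inr (h₂.mem x hx).1, Or.inr (h₂.mem x hx).2⟩
  · unfold graft at hx ⊢
    split_ifs at hx ⊢ with hxr hxD
    exacts [hxr ▸ hrv, h₁.adj x hx, h₂.adj x hx]
  · obtain ⟨ht₁, hht₁⟩ := h₁.exists_height
    obtain ⟨ht₂, hht₂⟩ := h₂.exists_height
    classical
    refine ⟨fun x => if x ∈ D then ht₁ x + ht₂ v + 1 else ht₂ x, fun x hx => ?_⟩
    unfold graft at hx ⊢
    split_ifs at hx ⊢ with hxr hxD
    · simp [hDT.notMem_of_mem_right hvT, hxr, hrD]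
    · simp [(h₁.mem x hx).2, hxD, hht₁ x hx]
    · simp [hDT.notMem_of_mem_right (h₂.mem x hx).2, hxD, hht₂ x hx]
  · have hdown := isAncestor_graft_of_mem hD₁ hr hroot hrv.ne (f₂ := f₂)
    rcases hx with hx | hx <;> rcases hy with hy | hy
    · exact (h₁.isAncestor_or_isAncestor x hx y hy hxy).imp
        (·.graft_left hD₁ hr) (·.graft_left hD₁ hr)
    · exact .inr (hedge x hx y hy hxy ▸ hdown x hx)
    · exact .inl (hedge y hy x hx hxy.symm ▸ hdown y hy)
    · exact (h₂.isAncestor_or_isAncestor x hx y hy hxy).imp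
        (·.graft_right hD₂ hrD) (·.graft_right hD₂ hrD)

variable (G) in
/-- `ReachIn G S u w`: some walk of `G` from `u` to `w` has all its vertices after `u` in `S`. -/
def ReachIn (S : Set V) : V → V → Prop :=
  Relation.ReflTransGen fun a b => G.Adj a b ∧ b ∈ S

theorem ReachIn.restrict {S : Set V} {u w : V} (h : G.ReachIn S u w) :
    G.ReachIn {x | G.ReachIn S u x} u w := by
  induction h with
  | refl => exact .refl
  | tail hux hxy ih => exact ih.tail ⟨hxy.1, hux.tail hxy⟩

theorem ReachIn.mem_or_reachIn_sdiff {S D : Set V} {v u : V}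
    (hD : ∀ a ∈ D, ∀ b ∈ S, G.Adj a b → b ∈ D ∨ b = v) (h : G.ReachIn S v u) :
    u ∈ D ∨ G.ReachIn (S \ D) v u := by
  induction h with
  | refl => exact .inr .refl
  | @tail a b _ hab ih =>
    by_cases hb : b ∈ D
    · exact .inl hb
    rcases ih with ha | ha
    · exact .inr ((hD a ha b hab.2 hab.1).resolve_left hb ▸ .refl)
    · exact .inr (ha.tail ⟨hab.1, hab.2, hb⟩)

theorem exists_isNormalForest_of_forall_mem {S : Set V} {P : (V → V) → V → Prop}
    (h : ∀ v ∈ S, ∃ f, G.IsNormalForest S f ∧ P f v) : ∃ f, G.IsNormalForest S f := by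
  rcases S.eq_empty_or_nonempty with rfl | ⟨v, hv⟩
  · exact ⟨id, isNormalForest_empty_id⟩
  · obtain ⟨f, hf, -⟩ := h v hv
    exact ⟨f, hf⟩

theorem exists_isNormalForest_root [Finite V] (S : Set V) :
    ∀ v ∈ S, ∃ f, G.IsNormalForest S f ∧ f v = v ∧ ∀ u, G.ReachIn S v u → IsAncestor f v u := by
  induction S using WellFoundedLT.induction with
  | _ S ih =>
  intro v hv
  by_cases hnbr : ∃ r ∈ S, G.Adj v r
  · -- depth-first search: the component `D` of a neighbour `r` in `S \ {v}` is hung below `v`,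
    -- the rest `S \ D` is searched from `v` again
    obtain ⟨r, hrS, hvr⟩ := hnbr
    set D := {u | G.ReachIn (S \ {v}) r u}
    have hrD : r ∈ D := Relation.ReflTransGen.refl
    have hDS : D ⊆ S \ {v} := fun u hu => by
      rcases Relation.ReflTransGen.cases_tail hu with rfl | ⟨_, -, -, hu⟩
      exacts [⟨hrS, hvr.ne.symm⟩, hu]
    have hvD : v ∉ D := fun h => (hDS h).2 rfl
    have hclosed : ∀ a ∈ D, ∀ b ∈ S, G.Adj a b → b ∈ D ∨ b = v := fun a ha b hb hab => by
      by_cases hbv : b = v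
      exacts [.inr hbv, .inl (Relation.ReflTransGen.tail ha ⟨hab, hb, hbv⟩)]
    obtain ⟨f₁, h₁, hr, hreach₁⟩ :=
      ih D (hDS.trans_ssubset (Set.sdiff_singleton_ssubset.mpr hv)) r hrD
    obtain ⟨f₂, h₂, hv₂, hreach₂⟩ :=
      ih (S \ D) (Set.sdiff_ssubset_left_iff.mpr ⟨r, hrS, hrD⟩) v ⟨hv, hvD⟩
    have hroot : ∀ x ∈ D, IsAncestor f₁ r x := fun x hx => hreach₁ x (ReachIn.restrict hx)
    have hDT : Disjoint D (S \ D) := Set.disjoint_sdiff_right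
    refine ⟨graft D r v f₁ f₂, ?_, by simp [graft, hvr.ne, hvD, hv₂], fun u hu => ?_⟩
    · have := isNormalForest_graft h₁ h₂ hDT hrD hr ⟨hv, hvD⟩ hvr.symm hroot
        fun x hx y hy hxy => (hclosed x hx y hy.1 hxy).resolve_left hy.2
      rwa [Set.union_sdiff_cancel (hDS.trans Set.sdiff_subset)] at this
    rcases ReachIn.mem_or_reachIn_sdiff hclosed hu with hu | hu
    · exact isAncestor_graft_of_mem (fun x hx => (h₁.mem x hx).1) hr hroot hvr.ne.symm u hu
    · exact (hreach₂ u hu).graft_right (fun x hx => hDT.notMem_of_mem_right (h₂.mem x hx).1) hrD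
  · push Not at hnbr
    obtain ⟨f, hf⟩ :=
      exists_isNormalForest_of_forall_mem (ih _ (Set.sdiff_singleton_ssubset.mpr hv))
    refine ⟨f, ?_, by_contra fun h => (hf.mem v h).1.2 rfl, fun u hu => ?_⟩
    · have := hf.insert (v := v) fun y hy => hnbr y hy.1
      rwa [Set.insert_sdiff_singleton, Set.insert_eq_of_mem hv] at this
    rcases Relation.ReflTransGen.cases_head hu with rfl | ⟨c, ⟨hvc, hc⟩, -⟩
    exacts [.refl _ _, absurd hvc (hnbr c hc)]

theorem exists_isNormalForest [Finite V] (S : Set V) : ∃ f, G.IsNormalForest S f :=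
  exists_isNormalForest_of_forall_mem (exists_isNormalForest_root S)

def IsNormalForest.toTreedepthDecomp (hf : G.IsNormalForest Set.univ f) : TreedepthDecomp G where
  anc := IsAncestor f
  refl := IsAncestor.refl f
  antisymm _ _ := IsAncestor.antisymm hf.exists_height.choose_spec
  trans _ _ _ huv hvw := huv.trans hvw
  chain _ _ _ := IsAncestor.total
  edge x y := hf.isAncestor_or_isAncestor x trivial y trivial

theorem IsNormalForest.depthLE_toTreedepthDecomp (hf : G.IsNormalForest Set.univ f) {n : ℕ}
    (hn : ∀ u v (p : G.Walk u v), p.IsPath → p.support.length ≤ n) :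
    hf.toTreedepthDecomp.depthLE n := by
  classical
  intro s hs
  rcases s.eq_empty_or_nonempty with rfl | hne
  · simp
  obtain ⟨ht, hht⟩ := hf.exists_height
  obtain ⟨b, hb, hmax⟩ := s.exists_max_image ht hne
  obtain ⟨r, p, hp, hsupp⟩ := G.exists_isPath_support_iff_isAncestor hf.adj hht b
  have hsub : s ⊆ p.support.toFinset := fun a ha => by
    rw [List.mem_toFinset, hsupp]
    rcases hs a ha b hb with hab | hba
    · exact hab
    obtain rfl | hne := eq_or_ne b a
    · exact .refl f b
    · exact absurd (hmax a ha) (hba.height_lt hht hne).not_ge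
  calc s.card ≤ p.support.toFinset.card := Finset.card_le_card hsub
    _ ≤ p.support.length := List.toFinset_card_le _
    _ ≤ n := hn _ _ p hp

theorem treedepth_le_of_forall_isPath_support_length_le [Finite V] {n : ℕ}
    (hn : ∀ u v (p : G.Walk u v), p.IsPath → p.support.length ≤ n) : treedepth G ≤ n := by
  obtain ⟨f, hf⟩ := exists_isNormalForest (G := G) Set.univ
  exact Nat.sInf_le ⟨hf.toTreedepthDecomp, hf.depthLE_toTreedepthDecomp hn⟩

end SimpleGraph

/-- If `G` admits a linear coloring with `k` colors, then the
treedepth of `G` is at most `2 ^ k`. -/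
theorem treedepth_le_two_pow_of_linearColoring {V : Type*} [Fintype V]
    (G : SimpleGraph V) (k : ℕ) (ψ : V → Fin k) (h : IsLinearColoring G ψ) :
    treedepth G ≤ 2 ^ k :=
  SimpleGraph.treedepth_le_of_forall_isPath_support_length_le fun _ _ _ hp => by
    simpa using (h.length_support_lt hp).le
end

section
/- If G has maximum degree at most 2, then every linear coloring of G is also a centered coloring. -/
/-!
In a graph of maximum degree at most two, a longest path `p` in the subgraph induced by a connected
set `S` visits all of `S`: an edge leaving `p` at an endpoint would extend `p`, and one leaving it
at an interior vertex would give that vertex a third neighbour. A vertex whose colour is unique on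
this Hamiltonian path is then a centre of `S`, since the path passes through every vertex of `S`
exactly once.
-/

namespace SimpleGraph

variable {V : Type*} {G : SimpleGraph V}

lemma degree_induce_le (s : Set V) [G.LocallyFinite] [(G.induce s).LocallyFinite] (v : s) :
    (G.induce s).degree v ≤ G.degree v := by
  rw [← card_neighborSet_eq_degree, ← card_neighborSet_eq_degree]
  exact Fintype.card_le_of_injective (fun w => ⟨w.1.1, w.2⟩) fun w w' h => by
    simpa [Subtype.ext_iff] using h

lemma Walk.IsPath.eq_start_or_eq_end_of_adj_notMem_support [G.LocallyFinite]
    {a b y z : V} {p : G.Walk a b} (hp : p.IsPath) (hy : y ∈ p.support) (hdeg : G.degree y ≤ 2)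
    (hyz : G.Adj y z) (hz : z ∉ p.support) : y = a ∨ y = b := by
  classical
  obtain ⟨i, rfl, hi⟩ := mem_support_iff_exists_getVert.mp hy
  by_contra! hend
  have hi0 : i ≠ 0 := by rintro rfl; simp at hend
  have hil : i < p.length := hi.lt_of_ne (by rintro rfl; simp at hend)
  have hprev : G.Adj (p.getVert i) (p.getVert (i - 1)) := by
    simpa [Nat.sub_add_cancel (Nat.one_le_iff_ne_zero.mpr hi0)] using
      (p.adj_getVert_succ (i := i - 1) (by omega)).symm
  have hnext : G.Adj (p.getVert i) (p.getVert (i + 1)) := p.adj_getVert_succ hil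
  have hne : p.getVert (i - 1) ≠ p.getVert (i + 1) := fun h => by
    have := hp.getVert_injOn (by simp only [Set.mem_ofPred_eq]; omega)
      (by simp only [Set.mem_ofPred_eq]; omega) h
    omega
  have hsub : ({p.getVert (i - 1), p.getVert (i + 1), z} : Finset V) ⊆
      G.neighborFinset (p.getVert i) := by
    simp [Finset.insert_subset_iff, hprev, hnext, hyz]
  have hcard : ({p.getVert (i - 1), p.getVert (i + 1), z} : Finset V).card = 3 :=
    Finset.card_eq_three.mpr ⟨_, _, _, hne, by rintro rfl; exact hz (p.getVert_mem_support _),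
      by rintro rfl; exact hz (p.getVert_mem_support _), rfl⟩
  have := Finset.card_le_card hsub
  rw [hcard, card_neighborFinset_eq_degree] at this
  omega

lemma Connected.exists_isHamiltonian_of_degree_le_two [Finite V] [DecidableEq V]
    [G.LocallyFinite] (hG : G.Connected) (hdeg : ∀ v, G.degree v ≤ 2) :
    ∃ (a b : V) (p : G.Walk a b), p.IsHamiltonian := by
  classical
  have := Fintype.ofFinite V
  have : Nonempty (Σ a b, G.Path a b) := ⟨⟨hG.nonempty.some, _, Path.nil⟩⟩
  obtain ⟨⟨a, b, p, hp⟩, hmax⟩ :=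
    Finite.exists_max fun q : Σ a b, G.Path a b => q.2.2.1.length
  refine ⟨a, b, p, hp.isHamiltonian_of_mem fun w => ?_⟩
  by_contra hw
  obtain ⟨d, -, hd, hd'⟩ :=
    ((hG.preconnected a w).some).exists_boundary_dart {x | x ∈ p.support} p.start_mem_support hw
  rcases hp.eq_start_or_eq_end_of_adj_notMem_support hd (hdeg _) d.adj hd' with rfl | rfl
  · have := hmax ⟨_, _, Walk.cons d.adj.symm p, (Walk.cons_isPath_iff _ _).mpr ⟨hp, hd'⟩⟩
    simp at this
  · have := hmax ⟨_, _, Walk.cons d.adj.symm p.reverse,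
      (Walk.cons_isPath_iff _ _).mpr ⟨hp.reverse, by simpa using hd'⟩⟩
    simp at this

lemma exists_isPath_support_toFinset_eq [DecidableEq V] [G.LocallyFinite] {S : Finset V}
    (hS : (G.induce (S : Set V)).Connected) (hdeg : ∀ v ∈ S, G.degree v ≤ 2) :
    ∃ (a b : V) (p : G.Walk a b), p.IsPath ∧ p.support.toFinset = S := by
  classical
  obtain ⟨a, b, p, hp⟩ := hS.exists_isHamiltonian_of_degree_le_two fun v =>
    (degree_induce_le _ v).trans (hdeg v v.2)
  refine ⟨_, _, p.map (Embedding.induce _).toHom,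
    (Walk.isPath_map_iff_of_injective Subtype.val_injective).mpr hp.isPath, ?_⟩
  ext v
  rw [List.mem_toFinset, Walk.support_map, List.mem_map]
  exact ⟨fun ⟨u, _, hu⟩ => hu ▸ u.2, fun hv => ⟨⟨v, hv⟩, hp.mem_support _, rfl⟩⟩

end SimpleGraph

lemma List.Nodup.card_filter_toFinset_eq_count_map {α β : Type*} [DecidableEq α] [DecidableEq β]
    {l : List α} (hl : l.Nodup) (f : α → β) (c : β) :
    (l.toFinset.filter fun x => f x = c).card = (l.map f).count c := by
  rw [List.count_eq_countP, List.countP_map, List.countP_eq_length_filter,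
    ← List.toFinset_card_of_nodup (hl.filter _), List.toFinset_filter]
  simp

lemma IsLinearColoring.exists_card_filter_eq_one {V C : Type*} [DecidableEq V] [DecidableEq C]
    {G : SimpleGraph V} {ψ : V → C} (h : IsLinearColoring G ψ) {a b : V} {p : G.Walk a b}
    (hp : p.IsPath) :
    ∃ w ∈ p.support.toFinset, (p.support.toFinset.filter fun x => ψ x = ψ w).card = 1 := by
  obtain ⟨w, hw, hcount⟩ := h p hp
  refine ⟨w, List.mem_toFinset.mpr hw, ?_⟩
  rwa [hp.support_nodup.card_filter_toFinset_eq_count_map]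

/-- If `G` has maximum degree at most `2`, then every linear
coloring of `G` is also a centered coloring. -/
theorem linear_is_centered_of_maxDegree_le_two {V : Type*} [Fintype V]
    (G : SimpleGraph V) [DecidableRel G.Adj] (hΔ : G.maxDegree ≤ 2)
    {C : Type*} [DecidableEq C] (ψ : V → C) (h : IsLinearColoring G ψ) :
    IsCenteredColoring G ψ := by
  classical
  intro S _ hS
  obtain ⟨a, b, p, hp, rfl⟩ := SimpleGraph.exists_isPath_support_toFinset_eq hS
    fun v _ => (G.degree_le_maxDegree v).trans hΔ
  exact h.exists_card_filter_eq_one hp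
end

section
/- If G is a cograph, then every linear coloring of G is also a centered coloring. -/
/-!
Seinsche: if `G` is P₄-free and both `G` and `Gᶜ` are connected, `G` has at most one vertex.
Remove a vertex `v`; by induction `G - v` or its complement is disconnected. If `G - v` is
disconnected, `v` is adjacent to all other vertices, for a non-neighbour `x` of `v` and a
neighbour of `v` in another component of `G - v` would span an induced P₄ with `v`; so `v` is
isolated in `Gᶜ`. The other case is symmetric, as P₄ is self-complementary.

Hence a connected set `S` of a cograph with `|S| ≥ 2` is the join of two nonempty parts (the
components of the complement of `G[S]`). A linear coloring is proper, so a color repeated in `S`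
is repeated inside one part; if every color of `S` were repeated, there would be `a, a'` in one
part and `b, b'` in another with `ψ a = ψ a'` and `ψ b = ψ b'`, and the path `a b a' b'` would
have no color of its own.
-/

namespace SimpleGraph

variable {V : Type*} {G : SimpleGraph V}

lemma isIndContained_pathGraph_four {a b c d : V} (hab : G.Adj a b) (hbc : G.Adj b c)
    (hcd : G.Adj c d) (hac : ¬ G.Adj a c) (had : ¬ G.Adj a d) (hbd : ¬ G.Adj b d) :
    pathGraph 4 ⊴ G := by
  have hac' : a ≠ c := by rintro rfl; exact had hcd
  have had' : a ≠ d := by rintro rfl; exact hac hcd.symm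
  have hbd' : b ≠ d := by rintro rfl; exact had hab
  have hinj : Function.Injective ![a, b, c, d] := by
    intro i j
    fin_cases i <;> fin_cases j <;>
      simp [hab.ne, hbc.ne, hcd.ne, hab.ne', hbc.ne', hcd.ne', hac', had', hbd', hac'.symm,
        had'.symm, hbd'.symm]
  refine ⟨⟨⟨_, hinj⟩, fun {i j} => ?_⟩⟩
  fin_cases i <;> fin_cases j <;> simp [pathGraph_adj, hab, hbc, hcd, hac, had, hbd, adj_comm]

/-- The complement of the path `0 - 1 - 2 - 3` is the path `1 - 3 - 0 - 2`. -/
def pathGraphFourIsoCompl : pathGraph 4 ≃g (pathGraph 4)ᶜ where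
  toFun := ![1, 3, 0, 2]
  invFun := ![2, 0, 3, 1]
  left_inv := by decide
  right_inv := by decide
  map_rel_iff' {i j} := by fin_cases i <;> fin_cases j <;> simp [pathGraph_adj]

lemma pathGraph_four_isIndContained_compl_iff : pathGraph 4 ⊴ Gᶜ ↔ pathGraph 4 ⊴ G := by
  rw [← compl_isIndContained_compl, compl_compl]
  exact ⟨pathGraphFourIsoCompl.isIndContained.trans, pathGraphFourIsoCompl.isIndContained'.trans⟩

lemma induce_compl (s : Set V) : Gᶜ.induce s = (G.induce s)ᶜ := by
  ext x y
  simp [Subtype.ext_iff]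

lemma Reachable.exists_adj_of_mem_of_notMem {S : Set V} {a b : V} (h : G.Reachable a b)
    (ha : a ∈ S) (hb : b ∉ S) : ∃ x ∈ S, ∃ y ∉ S, G.Adj x y := by
  obtain ⟨p⟩ := h
  obtain ⟨d, -, hd₁, hd₂⟩ := p.exists_boundary_dart S ha hb
  exact ⟨d.fst, hd₁, d.snd, hd₂, d.adj⟩

lemma adj_of_not_connected_induce_compl_singleton (hG : ¬ pathGraph 4 ⊴ G) (hc : G.Connected)
    {v : V} (hv : ¬ (G.induce {v}ᶜ).Connected) {w : V} (hw : w ≠ v) : G.Adj v w := by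
  set H := G.induce {v}ᶜ
  have reach_nbr (x : ↥({v}ᶜ : Set V)) : ∃ y, H.Reachable x y ∧ G.Adj v y := by
    obtain ⟨u, ⟨hu, hxu⟩, y, hy, huy⟩ := (hc.preconnected x v).exists_adj_of_mem_of_notMem
      (S := {u | ∃ hu : u ≠ v, H.Reachable x ⟨u, hu⟩}) ⟨x.2, .rfl⟩ (by simp)
    by_cases hyv : y = v
    · subst hyv
      exact ⟨⟨u, hu⟩, hxu, huy.symm⟩
    · exact absurd ⟨hyv, hxu.trans (induce_adj.2 huy).reachable⟩ hy
  by_contra hvw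
  obtain ⟨z, hz⟩ : ∃ z, ¬ H.Reachable ⟨w, hw⟩ z := by
    by_contra! h
    exact hv (connected_iff_exists_forall_reachable _ |>.2 ⟨_, h⟩)
  obtain ⟨y₁, hwy₁, hvy₁⟩ := reach_nbr ⟨w, hw⟩
  obtain ⟨y₂, hzy₂, hvy₂⟩ := reach_nbr z
  obtain ⟨x, ⟨hwx, hvx⟩, y, hy, hxy⟩ := hwy₁.exists_adj_of_mem_of_notMem
    (S := {u | H.Reachable ⟨w, hw⟩ u ∧ ¬ G.Adj v u}) ⟨.rfl, hvw⟩ (fun h => h.2 hvy₁)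
  have hwy : H.Reachable ⟨w, hw⟩ y := hwx.trans hxy.reachable
  have hvy : G.Adj v y := by_contra fun h => hy ⟨hwy, h⟩
  have not_adj (u) (hu : H.Reachable ⟨w, hw⟩ u) : ¬ G.Adj u y₂ := fun h =>
    hz (hu.trans ((induce_adj.2 h).reachable.trans hzy₂.symm))
  exact hG (isIndContained_pathGraph_four (induce_adj.1 hxy) hvy.symm hvy₂ (fun h => hvx h.symm)
    (not_adj x hwx) (not_adj y hwy))

lemma not_connected_compl_of_forall_adj [Nontrivial V] {v : V} (hv : ∀ w ≠ v, G.Adj v w) :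
    ¬ Gᶜ.Connected := fun hc => by
  obtain ⟨u, hu⟩ := hc.preconnected.exists_adj_of_nontrivial v
  exact (compl_adj G v u).1 hu |>.2 (hv u hu.ne')

lemma subsingleton_of_connected_of_connected_compl [Finite V] (hG : ¬ pathGraph 4 ⊴ G)
    (hc : G.Connected) (hcc : Gᶜ.Connected) : Subsingleton V := by
  have := Fintype.ofFinite V
  revert G
  refine Fintype.induction_subsingleton_or_nontrivial
    (P := fun V _ => ∀ {G : SimpleGraph V}, ¬ pathGraph 4 ⊴ G → G.Connected → Gᶜ.Connected →
      Subsingleton V) V (fun _ _ _ _ _ _ => inferInstance) ?_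
  intro V _ _ ih G hG hc hcc
  classical
  obtain ⟨v⟩ := ‹Nontrivial V›.to_nonempty
  have hGc : ¬ pathGraph 4 ⊴ Gᶜ := pathGraph_four_isIndContained_compl_iff.not.2 hG
  suffices (∀ w ≠ v, G.Adj v w) ∨ ∀ w ≠ v, Gᶜ.Adj v w by
    rcases this with h | h
    · exact absurd hcc (not_connected_compl_of_forall_adj h)
    · exact absurd hc (compl_compl G ▸ not_connected_compl_of_forall_adj h)
  by_cases h₁ : (G.induce {v}ᶜ).Connected
  · by_cases h₂ : (Gᶜ.induce {v}ᶜ).Connected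
    · have : Subsingleton ↥({v}ᶜ : Set V) :=
        ih _ (Fintype.card_subtype_lt (p := (· ∈ ({v}ᶜ : Set V))) (x := v) (by simp))
          (fun h => hG (h.trans (Embedding.induce _).isIndContained)) h₁ (induce_compl _ ▸ h₂)
      obtain ⟨u, hu⟩ := exists_ne v
      have eq_u (w) (hw : w ≠ v) : w = u :=
        congrArg Subtype.val (Subsingleton.elim (α := ↥({v}ᶜ : Set V)) ⟨w, hw⟩ ⟨u, hu⟩)
      by_cases huv : G.Adj v u
      · exact .inl fun w hw => eq_u w hw ▸ huv
      · exact .inr fun w hw => eq_u w hw ▸ (compl_adj G v u).2 ⟨hu.symm, huv⟩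
    · exact .inr fun w => adj_of_not_connected_induce_compl_singleton hGc hcc h₂
  · exact .inl fun w => adj_of_not_connected_induce_compl_singleton hG hc h₁

end SimpleGraph

section LinearColoring

open SimpleGraph

variable {V W C : Type*} [DecidableEq C] {G : SimpleGraph V} {ψ : V → C}

lemma IsLinearColoring.comp (h : IsLinearColoring G ψ) {H : SimpleGraph W} (f : H ↪g G) :
    IsLinearColoring H (ψ ∘ f) := by
  intro u v p hp
  obtain ⟨w, hw, hcount⟩ := h (p.map f.toHom) (hp.map f.injective)
  rw [Walk.support_map, List.map_map] at hcount
  rw [Walk.support_map] at hw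
  obtain ⟨w', hw', rfl⟩ := List.mem_map.1 hw
  exact ⟨w', hw', hcount⟩

lemma IsLinearColoring.ne_of_adj (h : IsLinearColoring G ψ) {a b : V} (hab : G.Adj a b) :
    ψ a ≠ ψ b := fun hψ => by
  obtain ⟨w, hw, hcount⟩ := h (.cons hab .nil) (by simp [hab.ne])
  simp only [Walk.support_cons, Walk.support_nil, List.mem_cons, List.not_mem_nil, or_false] at hw
  rcases hw with rfl | rfl <;> simp [hψ] at hcount

lemma IsLinearColoring.false_of_abab_path (h : IsLinearColoring G ψ) {a b a' b' : V}
    (hab : G.Adj a b) (hba' : G.Adj b a') (ha'b' : G.Adj a' b') (haa' : a ≠ a') (hbb' : b ≠ b')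
    (hab' : a ≠ b') (hψa : ψ a' = ψ a) (hψb : ψ b' = ψ b) : False := by
  have hne := h.ne_of_adj hab
  obtain ⟨w, hw, hcount⟩ := h (.cons hab (.cons hba' (.cons ha'b' .nil)))
    (by simp [hab.ne, hba'.ne, ha'b'.ne, haa', hbb', hab'])
  simp only [Walk.support_cons, Walk.support_nil, List.mem_cons, List.not_mem_nil, or_false] at hw
  rcases hw with rfl | rfl | rfl | rfl <;> simp [hψa, hψb, hne, hne.symm] at hcount

lemma IsLinearColoring.exists_unique_color_of_not_connected_compl [Nonempty V]
    (h : IsLinearColoring G ψ) (hG : ¬ Gᶜ.Connected) : ∃ w, ∀ x, ψ x = ψ w → x = w := by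
  obtain ⟨a, b, hab⟩ : ∃ a b, ¬ Gᶜ.Reachable a b := by
    by_contra! h
    exact hG ⟨h⟩
  have adj_of (x y) (hxy : ¬ Gᶜ.Reachable x y) : G.Adj x y := by
    simpa using (Gᶜ.reachable_or_compl_adj x y).resolve_left hxy
  have reachable_of (x y) (hψ : ψ x = ψ y) : Gᶜ.Reachable x y :=
    by_contra fun hxy => h.ne_of_adj (adj_of x y hxy) hψ
  by_contra! hno
  obtain ⟨a', hψa, ha'⟩ := hno a
  obtain ⟨b', hψb, hb'⟩ := hno b
  have hab' : ¬ Gᶜ.Reachable a b' := fun h => hab (h.trans (reachable_of b' b hψb))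
  exact h.false_of_abab_path (adj_of a b hab)
    (adj_of b a' fun h => hab (h.trans (reachable_of a' a hψa)).symm)
    (adj_of a' b' fun h => hab' ((reachable_of a' a hψa).symm.trans h))
    ha'.symm hb'.symm (fun h => hab' (h ▸ .rfl)) hψa hψb

end LinearColoring

theorem linear_is_centered_of_cograph_general {V : Type*}
    (G : SimpleGraph V) (hco : IsEmpty (SimpleGraph.pathGraph 4 ↪g G))
    {C : Type*} [DecidableEq C] (ψ : V → C) (h : IsLinearColoring G ψ) :
    IsCenteredColoring G ψ := by
  intro S _ hconn
  have hfree : ¬ (SimpleGraph.pathGraph 4).IsIndContained (G.induce S) := fun ⟨f⟩ =>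
    hco.false ((SimpleGraph.Embedding.induce _).comp f)
  have : Nonempty S := hconn.nonempty
  obtain ⟨w, hw⟩ : ∃ w : S, ∀ x : S, ψ x = ψ w → x = w := by
    by_cases hcc : (G.induce S)ᶜ.Connected
    · have := SimpleGraph.subsingleton_of_connected_of_connected_compl hfree hconn hcc
      exact ⟨Classical.arbitrary _, fun _ _ => Subsingleton.elim _ _⟩
    · exact (h.comp (SimpleGraph.Embedding.induce _)).exists_unique_color_of_not_connected_compl hcc
  refine ⟨w, w.2, Finset.card_eq_one.2 ⟨w, ?_⟩⟩
  ext x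
  simp only [Finset.mem_filter, Finset.mem_singleton]
  exact ⟨fun ⟨hx, hψ⟩ => congrArg Subtype.val (hw ⟨x, hx⟩ hψ), by rintro rfl; exact ⟨w.2, rfl⟩⟩

/-- If `G` is a cograph (no induced path on four vertices), then
every linear coloring of `G` is also a centered coloring. -/
theorem linear_is_centered_of_cograph {V : Type*} [Fintype V]
    (G : SimpleGraph V) (hco : IsEmpty (SimpleGraph.pathGraph 4 ↪g G))
    {C : Type*} [DecidableEq C] (ψ : V → C) (h : IsLinearColoring G ψ) :
    IsCenteredColoring G ψ :=
  linear_is_centered_of_cograph_general G hco ψ h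
end

section
/- Let G be an interval graph with maximal cliques C_1,...,C_m linearly ordered so that for each vertex the cliques containing it are consecutive. Let Q be the prevailing subgraph obtained by repeatedly choosing from the current clique the vertex v forgotten last (maximizing the index of the last clique containing v) and adding that last clique's vertices to Q. Then Q has a Hamiltonian path. -/
/-!
Order the prevailing subgraph `Q` by forget index, putting each prevailing vertex `w j` first
among the vertices forgotten together with it. Any two vertices `u`, `v` that are consecutive
in this order share the clique `C (F u)`: this is clear when `F u = F v`, and otherwise take the
first `j` with `v ∈ C (F (w j))`. The vertex `w j` cannot lie strictly between `u` and `v`, and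
`v = w j` would put `v` into the earlier clique `C (F (w (j - 1)))`; hence
`intro v ≤ F (w j) ≤ F u`. Listing `Q` in this order therefore traces a Hamiltonian path.
-/

theorem List.isChain_of_pairwise_of_forall_consecutive {α β : Type*} [LinearOrder β]
    {key : α → β} {R : α → α → Prop} {l : List α} (hsort : l.Pairwise (key · ≤ key ·))
    (hnd : l.Nodup)
    (hR : ∀ u ∈ l, ∀ v ∈ l, u ≠ v → key u ≤ key v →
      (∀ x ∈ l, x ≠ u → x ≠ v → key x ≤ key u ∨ key v ≤ key x) → R u v) :
    l.IsChain R := by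
  induction l with
  | nil => exact List.isChain_nil
  | cons u l ih =>
    obtain ⟨hu, hsort⟩ := List.pairwise_cons.mp hsort
    obtain ⟨hul, hnd⟩ := List.nodup_cons.mp hnd
    have ih := ih hsort hnd fun a ha b hb hab hle hgap =>
      hR a (.tail u ha) b (.tail u hb) hab hle fun x hx hxa hxb => by
        rcases List.mem_cons.mp hx with rfl | hx
        · exact .inl (hu a ha)
        · exact hgap x hx hxa hxb
    cases l with
    | nil => exact List.isChain_singleton u
    | cons v l =>
      refine List.isChain_cons_cons.mpr ⟨hR u (by simp) v (by simp) ?_ (hu v (by simp)) ?_, ih⟩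
      · rintro rfl
        exact hul (by simp)
      · intro x hx hxu hxv
        simp only [List.mem_cons, hxu, hxv, false_or] at hx
        exact .inr (List.rel_of_pairwise_cons hsort hx)

namespace SimpleGraph

theorem exists_isHamiltonian_of_isChain {W : Type*} [DecidableEq W] {G : SimpleGraph W}
    {l : List W} (hne : l ≠ []) (hchain : l.IsChain G.Adj) (hnd : l.Nodup)
    (hmem : ∀ x, x ∈ l) : ∃ (a b : W) (q : G.Walk a b), q.IsHamiltonian :=
  ⟨_, _, .ofSupport l hne hchain,
    (Walk.IsPath.mk' (by simpa using hnd)).isHamiltonian_of_mem (by simpa using hmem)⟩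

theorem exists_isHamiltonian_of_forall_consecutive {W β : Type*} [Fintype W] [Nonempty W]
    [DecidableEq W] [LinearOrder β] {G : SimpleGraph W} (key : W → β)
    (hadj : ∀ u v, u ≠ v → key u ≤ key v →
      (∀ x, x ≠ u → x ≠ v → key x ≤ key u ∨ key v ≤ key x) → G.Adj u v) :
    ∃ (a b : W) (q : G.Walk a b), q.IsHamiltonian := by
  have : Std.Total (key · ≤ key ·) := ⟨fun a b => le_total _ _⟩
  have : IsTrans W (key · ≤ key ·) := ⟨fun _ _ _ => le_trans⟩
  set l := (Finset.univ : Finset W).toList.insertionSort (key · ≤ key ·)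
  have hperm : l.Perm (Finset.univ : Finset W).toList := List.perm_insertionSort _ _
  have hmem : ∀ x, x ∈ l := by simp [hperm.mem_iff]
  have hnd : l.Nodup := hperm.nodup_iff.mpr (Finset.nodup_toList _)
  refine exists_isHamiltonian_of_isChain (List.ne_nil_of_mem (hmem (Classical.arbitrary W)))
    ?_ hnd hmem
  exact List.isChain_of_pairwise_of_forall_consecutive (List.pairwise_insertionSort _ _) hnd
    fun u _ v _ huv hle hgap => hadj u v huv hle fun x => hgap x (hmem x)

end SimpleGraph

section Prevailing

variable {V : Type*} {m p : ℕ} {C : Fin (m + 1) → Finset V} {intro F : V → Fin (m + 1)}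
  {w : Fin (p + 1) → V}

theorem mem_forget_of_mem (hconsec : ∀ v j, v ∈ C j ↔ intro v ≤ j ∧ j ≤ F v) {v : V}
    {j : Fin (m + 1)} (hv : v ∈ C j) : v ∈ C (F v) :=
  have h := (hconsec v j).mp hv
  (hconsec v (F v)).mpr ⟨h.1.trans h.2, le_rfl⟩

/-- Position of `v` along the Hamiltonian path; ties in forget index are broken in favour of the
prevailing vertices `w j`. -/
noncomputable def prevailingKey (F : V → Fin (m + 1)) (w : Fin (p + 1) → V) (v : V) : ℕ :=
  haveI := Classical.propDecidable
  2 * (F v : ℕ) + if v ∈ Set.range w then 0 else 1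

theorem two_mul_forget_le_prevailingKey (v : V) : 2 * (F v : ℕ) ≤ prevailingKey F w v :=
  Nat.le_add_right _ _

theorem prevailingKey_le_two_mul_forget_add_one (v : V) :
    prevailingKey F w v ≤ 2 * (F v : ℕ) + 1 := by
  unfold prevailingKey
  split_ifs <;> omega

theorem prevailingKey_eq_two_mul_forget_iff {v : V} :
    prevailingKey F w v = 2 * (F v : ℕ) ↔ v ∈ Set.range w := by
  unfold prevailingKey
  split_ifs <;> simp_all

theorem forget_le_of_prevailingKey_le {u v : V} (h : prevailingKey F w u ≤ prevailingKey F w v) :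
    F u ≤ F v := by
  have := two_mul_forget_le_prevailingKey (F := F) (w := w) u
  have := prevailingKey_le_two_mul_forget_add_one (F := F) (w := w) v
  rw [Fin.le_def]
  omega

theorem mem_forget_of_prevailingKey_consecutive
    (hconsec : ∀ v j, v ∈ C j ↔ intro v ≤ j ∧ j ≤ F v) {Q : Finset V}
    (hQ : ∀ x, x ∈ Q ↔ ∃ j, x ∈ C (F (w j))) (hwQ : ∀ j, w j ∈ Q)
    (hstep : ∀ j : Fin p, w j.succ ∈ C (F (w j.castSucc))) (hmono : StrictMono (fun j => F (w j)))
    {u v : V} (hu : u ∈ Q) (hv : v ∈ Q) (hle : prevailingKey F w u ≤ prevailingKey F w v)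
    (hgap : ∀ x ∈ Q, x ≠ u → x ≠ v →
      prevailingKey F w x ≤ prevailingKey F w u ∨ prevailingKey F w v ≤ prevailingKey F w x) :
    v ∈ C (F u) := by
  obtain ⟨j, hj, hmin⟩ := wellFounded_lt.has_min {j | v ∈ C (F (w j))} ((hQ v).mp hv)
  suffices F (w j) ≤ F u from
    (hconsec v _).mpr ⟨((hconsec v _).mp hj).1.trans this, forget_le_of_prevailingKey_le hle⟩
  by_contra! hlt
  have hkey_u : prevailingKey F w u < prevailingKey F w (w j) := by
    have := prevailingKey_le_two_mul_forget_add_one (F := F) (w := w) u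
    rw [prevailingKey_eq_two_mul_forget_iff.mpr ⟨j, rfl⟩]
    rw [Fin.lt_def] at hlt
    omega
  have hwv : w j = v := by
    by_contra hwv
    rcases hgap (w j) (hwQ j) (ne_of_apply_ne _ hkey_u.ne') hwv with h | h
    · exact h.not_gt hkey_u
    have hFv : F v ≤ F (w j) := forget_le_of_prevailingKey_le h
    have hkey_v : prevailingKey F w v = 2 * (F v : ℕ) := by
      have := two_mul_forget_le_prevailingKey (F := F) (w := w) v
      have := ((hconsec v _).mp hj).2
      rw [prevailingKey_eq_two_mul_forget_iff.mpr ⟨j, rfl⟩] at h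
      rw [Fin.le_def] at hFv this
      omega
    obtain ⟨i, rfl⟩ := prevailingKey_eq_two_mul_forget_iff.mp hkey_v
    exact hwv (congrArg w (hmono.injective (le_antisymm hFv ((hconsec _ _).mp hj).2)).symm)
  have hj0 : j ≠ 0 := by
    rintro rfl
    obtain ⟨k, hk⟩ := (hQ u).mp hu
    exact hlt.not_ge ((hmono.monotone (Fin.zero_le k)).trans ((hconsec u _).mp hk).2)
  obtain ⟨i, rfl⟩ := Fin.exists_succ_eq_of_ne_zero hj0
  exact hmin i.castSucc (hwv ▸ hstep i) Fin.castSucc_lt_succ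

end Prevailing

theorem prevailing_subgraph_hamiltonianPath_general {V : Type*} [DecidableEq V]
    (G : SimpleGraph V) (m : ℕ) (C : Fin (m + 1) → Finset V)
    (intro F : V → Fin (m + 1))
    -- the cliques containing a vertex are exactly the consecutive range
    -- between its introduction and forget indices
    (hconsec : ∀ (v : V) (j : Fin (m + 1)), v ∈ C j ↔ intro v ≤ j ∧ j ≤ F v)
    -- adjacency holds exactly when two distinct vertices share a clique
    (hadj : ∀ u v : V, G.Adj u v ↔ u ≠ v ∧ ∃ j, u ∈ C j ∧ v ∈ C j)
    -- the greedy sequence of prevailing-path vertices `w 0, …, w p`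
    (p : ℕ) (w : Fin (p + 1) → V)
    -- `w 0` is a vertex of the first clique forgotten last
    (hstart : w 0 ∈ C 0 ∧ ∀ u ∈ C 0, F u ≤ F (w 0))
    -- `w (j+1)` is a vertex of `C (F (w j))` forgotten last
    (hstep : ∀ j : Fin p, w j.succ ∈ C (F (w j.castSucc)) ∧
      ∀ u ∈ C (F (w j.castSucc)), F u ≤ F (w j.succ))
    -- the iteration makes progress through the clique ordering
    (hmono : StrictMono (fun j => F (w j))) :
    -- the prevailing subgraph
    ∀ Q : Finset V, Q = Finset.univ.biUnion (fun j : Fin (p + 1) => C (F (w j))) →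
      ∃ (x y : (Q : Set V)) (q : (G.induce (Q : Set V)).Walk x y), q.IsHamiltonian := by
  intro Q hQ
  have hmemQ : ∀ x, x ∈ Q ↔ ∃ j, x ∈ C (F (w j)) := by simp [hQ]
  have hwC : ∀ j, ∃ k, w j ∈ C k := Fin.cases ⟨0, hstart.1⟩ fun i => ⟨_, (hstep i).1⟩
  have hwQ : ∀ j, w j ∈ Q := fun j =>
    have ⟨_, hk⟩ := hwC j
    (hmemQ _).mpr ⟨j, mem_forget_of_mem hconsec hk⟩
  have : Nonempty (Q : Set V) := ⟨⟨w 0, hwQ 0⟩⟩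
  refine SimpleGraph.exists_isHamiltonian_of_forall_consecutive
    (fun x : (Q : Set V) => prevailingKey F w x) ?_
  rintro ⟨u, hu⟩ ⟨v, hv⟩ huv hle hgap
  obtain ⟨k, hk⟩ := (hmemQ u).mp hu
  have hvC : v ∈ C (F u) :=
    mem_forget_of_prevailingKey_consecutive hconsec hmemQ hwQ (fun i => (hstep i).1) hmono
      hu hv hle fun x hx hxu hxv => hgap ⟨x, hx⟩ (by simpa using hxu) (by simpa using hxv)
  exact SimpleGraph.induce_adj.mpr <|
    (hadj u v).mpr ⟨fun h => huv (Subtype.ext h), F u, mem_forget_of_mem hconsec hk, hvC⟩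

/-- in an interval graph with maximal cliques `C 0, …, C m`
linearly ordered so that the cliques containing each vertex are consecutive
(between its introduction index `intro v` and its forget index `F v`), the
prevailing subgraph `Q` — obtained by repeatedly choosing from the current
clique the vertex `w j` forgotten last and adding the clique `C (F (w j))` to
`Q` — has a Hamiltonian path. -/
theorem prevailing_subgraph_hamiltonianPath {V : Type*} [Fintype V] [DecidableEq V]
    (G : SimpleGraph V) (m : ℕ) (C : Fin (m + 1) → Finset V)
    (intro F : V → Fin (m + 1))
    -- the cliques containing a vertex are exactly the consecutive range
    -- between its introduction and forget indices
    (hconsec : ∀ (v : V) (j : Fin (m + 1)), v ∈ C j ↔ intro v ≤ j ∧ j ≤ F v)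
    -- adjacency holds exactly when two distinct vertices share a clique
    (hadj : ∀ u v : V, G.Adj u v ↔ u ≠ v ∧ ∃ j, u ∈ C j ∧ v ∈ C j)
    -- the greedy sequence of prevailing-path vertices `w 0, …, w p`
    (p : ℕ) (w : Fin (p + 1) → V)
    -- `w 0` is a vertex of the first clique forgotten last
    (hstart : w 0 ∈ C 0 ∧ ∀ u ∈ C 0, F u ≤ F (w 0))
    -- `w (j+1)` is a vertex of `C (F (w j))` forgotten last
    (hstep : ∀ j : Fin p, w j.succ ∈ C (F (w j.castSucc)) ∧
      ∀ u ∈ C (F (w j.castSucc)), F u ≤ F (w j.succ))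
    -- the iteration makes progress through the clique ordering
    (hmono : StrictMono (fun j => F (w j)))
    -- and terminates at the last clique
    (hend : F (w (Fin.last p)) = Fin.last m) :
    -- the prevailing subgraph
    ∀ Q : Finset V, Q = Finset.univ.biUnion (fun j : Fin (p + 1) => C (F (w j))) →
      ∃ (x y : (Q : Set V)) (q : (G.induce (Q : Set V)).Walk x y), q.IsHamiltonian :=
  prevailing_subgraph_hamiltonianPath_general G m C intro F hconsec hadj p w hstart hstep hmono
end
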